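/- For any two D×M index matrices K₁ and K₂ (over ℝ), there exists a D×D permutation matrix φ such that φ * K₁ = K₂. In particular, knowing only a permuted index matrix, every index matrix is a possible preimage under some unknown permutation. -/

import Mathlib

/-- A permutation matrix of size `D`: a real `D × D` matrix all of whose entries lie in
`{0, 1}` and such that every row and every column contains exactly one entry equal to `1`. -/
def IsPermMatrix {D : ℕ} (φ : Matrix (Fin D) (Fin D) ℝ) : Prop :=
  (∀ i j, φ i j = 0 ∨ φ i j = 1) ∧
  (∀ i, ∃! j, φ i j = 1) ∧
  (∀ j, ∃! i, φ i j = 1)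

/-- An index matrix of size `D × M`: a real `D × M` matrix all of whose entries lie in
`{0, 1}`, every column contains exactly one entry equal to `1`, and every row contains
at most one entry equal to `1`. -/
def IsIndexMatrix {D M : ℕ} (K : Matrix (Fin D) (Fin M) ℝ) : Prop :=
  (∀ i m, K i m = 0 ∨ K i m = 1) ∧
  (∀ m, ∃! i, K i m = 1) ∧
  (∀ i m m', K i m = 1 → K i m' = 1 → m = m')

/-!
An index matrix is the `0/1` matrix of an injection `r : Fin M → Fin D`, whose column `m` has its
`1` in row `r m`. Any two injections of a finite type into `Fin D` differ by a permutation `σ` of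
`Fin D`, and left multiplication by the permutation matrix of `σ⁻¹` moves row `r₁ m`
to row `σ (r₁ m) = r₂ m`.
-/

theorem isPermMatrix_permMatrix {D : ℕ} (σ : Equiv.Perm (Fin D)) :
    IsPermMatrix (σ.permMatrix ℝ) := by
  refine ⟨fun i j => ?_, fun i => ⟨σ i, ?_, ?_⟩, fun j => ⟨σ⁻¹ j, ?_, ?_⟩⟩ <;>
    simp +contextual [PEquiv.toMatrix_apply, eq_comm, em']

theorem IsIndexMatrix.exists_injective_eq_ite {D M : ℕ} {K : Matrix (Fin D) (Fin M) ℝ}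
    (hK : IsIndexMatrix K) :
    ∃ r : Fin M → Fin D, Function.Injective r ∧
      K = Matrix.of fun i m => if i = r m then 1 else 0 := by
  choose r hr hr_unique using hK.2.1
  refine ⟨r, fun m m' h => hK.2.2 (r m) m m' (hr m) (h ▸ hr m'), ?_⟩
  ext i m
  by_cases h : i = r m
  · simp [h, hr]
  · simpa [h] using (hK.1 i m).resolve_right (mt (hr_unique m i) h)

theorem exists_perm_mapping_index_matrices {D M : ℕ}
    (K₁ K₂ : Matrix (Fin D) (Fin M) ℝ)
    (hK₁ : IsIndexMatrix K₁) (hK₂ : IsIndexMatrix K₂) :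
    ∃ φ : Matrix (Fin D) (Fin D) ℝ, IsPermMatrix φ ∧ φ * K₁ = K₂ := by
  obtain ⟨r₁, hr₁, rfl⟩ := hK₁.exists_injective_eq_ite
  obtain ⟨r₂, hr₂, rfl⟩ := hK₂.exists_injective_eq_ite
  obtain ⟨σ, hσ⟩ := Equiv.Perm.exists_extending_pair r₁ r₂ hr₁ hr₂
  refine ⟨σ⁻¹.permMatrix ℝ, isPermMatrix_permMatrix _, ?_⟩
  rw [PEquiv.toMatrix_toPEquiv_mul]
  ext i m
  simp [Equiv.symm_apply_eq, hσ]
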